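/- Let 𝓜 be a linear map from symmetric m×m real matrices to ℝ^n that is (r+r', δ)-RIP with δ ∈ [0,1). Then for every symmetric m×m matrix Z of rank at most r and every symmetric m×m matrix Y of rank at most r', one has |⟨(𝓜*𝓜 − 𝓘)(Z), Y⟩| ≤ δ·‖Z‖_F·‖Y‖_F, where ⟨B,C⟩ = Tr(BᵀC). -/

import Mathlib

open Matrix MeasureTheory ProbabilityTheory BigOperators

noncomputable section

/-- Frobenius norm of a real matrix. -/
def frob {m n : ℕ} (M : Matrix (Fin m) (Fin n) ℝ) : ℝ :=
  Real.sqrt (∑ i, ∑ j, (M i j) ^ 2)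

/-- Euclidean norm of a vector in `ℝⁿ`. -/
def vnorm {n : ℕ} (v : Fin n → ℝ) : ℝ :=
  Real.sqrt (∑ i, (v i) ^ 2)

/-- Spectral norm (operator 2-norm) of a real matrix. -/
def spec {m n : ℕ} (M : Matrix (Fin m) (Fin n) ℝ) : ℝ :=
  ‖LinearMap.toContinuousLinearMap (Matrix.toEuclideanLin M)‖

theorem isHermitian_tmul {m n : ℕ} (M : Matrix (Fin m) (Fin n) ℝ) :
    (Mᵀ * M).IsHermitian := by
  simpa [Matrix.conjTranspose_eq_transpose_of_trivial] using
    Matrix.isHermitian_conjTranspose_mul_self M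

theorem posSemidef_tmul {m n : ℕ} (M : Matrix (Fin m) (Fin n) ℝ) :
    (Mᵀ * M).PosSemidef := by
  simpa [Matrix.conjTranspose_eq_transpose_of_trivial] using
    Matrix.posSemidef_conjTranspose_mul_self M

/-- The `i`-th largest singular value (1-indexed) of a real matrix, i.e. the square root of the
`i`-th largest eigenvalue of `MᵀM`; junk value `0` when `i` is out of range. -/
def svalue {m n : ℕ} (M : Matrix (Fin m) (Fin n) ℝ) (i : ℕ) : ℝ :=
  if h : 1 ≤ i ∧ i ≤ n then
    Real.sqrt ((isHermitian_tmul M).eigenvalues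
      (Tuple.sort (isHermitian_tmul M).eigenvalues ⟨n - i, by omega⟩))
  else 0

/-- Membership in the Stiefel manifold `St(m,r)`. -/
def Stiefel {m r : ℕ} (X : Matrix (Fin m) (Fin r) ℝ) : Prop :=
  Xᵀ * X = 1

/-- The Loewner order on (symmetric) real matrices: `A ⪯ B`. -/
def loewnerLE {m : ℕ} (A B : Matrix (Fin m) (Fin m) ℝ) : Prop :=
  (B - A).PosSemidef

/-- The inverse of the positive semidefinite square root of a matrix (junk value `0` when the
matrix is not positive semidefinite). -/
def psdSqrt {r : ℕ} {S : Matrix (Fin r) (Fin r) ℝ} (hS : S.PosSemidef) :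
    Matrix (Fin r) (Fin r) ℝ :=
  (hS.1.eigenvectorUnitary : Matrix (Fin r) (Fin r) ℝ) *
    diagonal (Real.sqrt ∘ hS.1.eigenvalues) *
      (star hS.1.eigenvectorUnitary : Matrix (Fin r) (Fin r) ℝ)

def sqrtInv {r : ℕ} (S : Matrix (Fin r) (Fin r) ℝ) : Matrix (Fin r) (Fin r) ℝ :=
  haveI := Classical.propDecidable S.PosSemidef
  if h : S.PosSemidef then (psdSqrt h)⁻¹ else 0

/-- The linear sensing map `𝓜` determined by feature matrices `M_i`:
`𝓜(B)_i = Tr(M_iᵀ B)`. -/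
def calM {m n : ℕ} (Ms : Fin n → Matrix (Fin m) (Fin m) ℝ)
    (B : Matrix (Fin m) (Fin m) ℝ) : Fin n → ℝ :=
  fun i => ((Ms i)ᵀ * B).trace

/-- The adjoint `𝓜*` of the sensing map: `𝓜*(y) = ∑ i, y_i M_i`. -/
def calMadj {m n : ℕ} (Ms : Fin n → Matrix (Fin m) (Fin m) ℝ)
    (y : Fin n → ℝ) : Matrix (Fin m) (Fin m) ℝ :=
  ∑ i, y i • Ms i

/-- `(𝓜*𝓜 − 𝓘)(B)`. -/
def calE {m n : ℕ} (Ms : Fin n → Matrix (Fin m) (Fin m) ℝ)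
    (B : Matrix (Fin m) (Fin m) ℝ) : Matrix (Fin m) (Fin m) ℝ :=
  calMadj Ms (calM Ms B) - B

/-- The `(s, δ)`-restricted isometry property for the sensing map determined by `Ms`. -/
def IsRIP {m n : ℕ} (Ms : Fin n → Matrix (Fin m) (Fin m) ℝ) (s : ℕ) (δ : ℝ) : Prop :=
  ∀ B : Matrix (Fin m) (Fin m) ℝ, B.IsSymm → B.rank ≤ s →
    (1 - δ) * frob B ^ 2 ≤ vnorm (calM Ms B) ^ 2 ∧
      vnorm (calM Ms B) ^ 2 ≤ (1 + δ) * frob B ^ 2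

/-- The Riemannian gradient on the Stiefel manifold obtained from the Euclidean gradient `g`
at the point `X`. -/
def Rgrad {m r : ℕ} (X g : Matrix (Fin m) (Fin r) ℝ) : Matrix (Fin m) (Fin r) ℝ :=
  (1 - X * Xᵀ) * g + (2⁻¹ : ℝ) • (X * (Xᵀ * g - gᵀ * X))

/-- One step of Riemannian gradient descent (with `μ = 2`) for the weight-normalized
matrix sensing problem. -/
def RGDstep {m r n : ℕ} (Ms : Fin n → Matrix (Fin m) (Fin m) ℝ)
    (A : Matrix (Fin m) (Fin m) ℝ) (η : ℝ)
    (p : Matrix (Fin m) (Fin r) ℝ × Matrix (Fin r) (Fin r) ℝ) :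
    Matrix (Fin m) (Fin r) ℝ × Matrix (Fin r) (Fin r) ℝ :=
  let X := p.1
  let Θ := p.2
  let Gt := calMadj Ms (calM Ms (X * Θ * Xᵀ - A)) * X * Θ
  let G := Rgrad X Gt
  let X' := (X - η • G) * sqrtInv (1 + η ^ 2 • (Gᵀ * G))
  let Θ' := X'ᵀ * A * X' - X'ᵀ * calE Ms (X' * Θ * X'ᵀ - A) * X'
  (X', Θ')

/-- The standard Gaussian ensemble on `m × r` real matrices (i.i.d. `N(0,1)` entries). -/
def gaussianEnsemble (m r : ℕ) : Measure (Fin m → Fin r → ℝ) :=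
  Measure.pi fun _ : Fin m => Measure.pi fun _ : Fin r => gaussianReal 0 1

end

/-! By polarization, `⟨𝓜Z, 𝓜Y⟩ - ⟨Z, Y⟩` is a quarter of the difference of the RIP defects
`‖𝓜B‖² - ‖B‖²` at `B = Z ± Y`, matrices of rank at most `r + r'`; hence it is at most
`δ/2 (‖Z‖² + ‖Y‖²)`. Both sides are bilinear resp. quadratic in `(Z, Y)`, so replacing `(Z, Y)` by
`(‖Y‖ Z, ‖Z‖ Y)` turns the bound into `δ ‖Z‖ ‖Y‖`. Finally `⟨(𝓜*𝓜 - 𝓘)Z, Y⟩ = ⟨𝓜Z, 𝓜Y⟩ - ⟨Z, Y⟩`. -/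

open scoped InnerProductSpace

namespace Matrix

variable {m n K : Type*} [Fintype n] [Field K]

theorem rank_add_le (A B : Matrix m n K) : (A + B).rank ≤ A.rank + B.rank := by
  rw [rank, rank, rank, mulVecLin_add]
  refine (Submodule.finrank_mono ?_).trans (Submodule.finrank_add_le_finrank_add_finrank _ _)
  rintro _ ⟨v, rfl⟩
  exact Submodule.add_mem_sup ⟨v, rfl⟩ ⟨v, rfl⟩

theorem rank_smul_le (c : K) (A : Matrix m n K) : (c • A).rank ≤ A.rank := by
  have : (c • A).mulVecLin = c • A.mulVecLin := LinearMap.ext fun v => smul_mulVec c A v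
  rw [rank, rank, this]
  exact Submodule.finrank_mono (LinearMap.range_smul_le_range _ c)

end Matrix

section RestrictedIsometry

variable {V E F : Type*} [AddCommGroup V] [Module ℝ V]
  [NormedAddCommGroup E] [InnerProductSpace ℝ E] [NormedAddCommGroup F] [InnerProductSpace ℝ F]
  (f : V →ₗ[ℝ] F) (g : V →ₗ[ℝ] E) {δ : ℝ}

theorem abs_inner_map_sub_inner_map_le_of_add_of_sub {x y : V}
    (hadd : |‖f (x + y)‖ ^ 2 - ‖g (x + y)‖ ^ 2| ≤ δ * ‖g (x + y)‖ ^ 2)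
    (hsub : |‖f (x - y)‖ ^ 2 - ‖g (x - y)‖ ^ 2| ≤ δ * ‖g (x - y)‖ ^ 2) :
    |⟪f x, f y⟫_ℝ - ⟪g x, g y⟫_ℝ| ≤ δ / 2 * (‖g x‖ ^ 2 + ‖g y‖ ^ 2) := by
  simp only [map_add, map_sub, norm_add_sq_real, norm_sub_sq_real, abs_le] at hadd hsub ⊢
  constructor <;> linarith [hadd.1, hadd.2, hsub.1, hsub.2]

variable {f g} in
theorem map_eq_zero_of_norm_map_eq_zero {x : V}
    (h : |‖f x‖ ^ 2 - ‖g x‖ ^ 2| ≤ δ * ‖g x‖ ^ 2) (hx : ‖g x‖ = 0) : f x = 0 := by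
  rw [hx] at h
  simpa using h

theorem abs_inner_map_sub_inner_map_le_mul {x y : V}
    (h : ∀ a b : ℝ, |‖f (a • x + b • y)‖ ^ 2 - ‖g (a • x + b • y)‖ ^ 2|
      ≤ δ * ‖g (a • x + b • y)‖ ^ 2) :
    |⟪f x, f y⟫_ℝ - ⟪g x, g y⟫_ℝ| ≤ δ * ‖g x‖ * ‖g y‖ := by
  rcases (mul_nonneg (norm_nonneg (g x)) (norm_nonneg (g y))).eq_or_lt with hxy | hxy
  · rcases mul_eq_zero.mp hxy.symm with hx | hy
    · have hfx : f x = 0 := map_eq_zero_of_norm_map_eq_zero (by simpa using h 1 0) hx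
      simp [hfx, norm_eq_zero.mp hx]
    · have hfy : f y = 0 := map_eq_zero_of_norm_map_eq_zero (by simpa using h 0 1) hy
      simp [hfy, norm_eq_zero.mp hy]
  have key := abs_inner_map_sub_inner_map_le_of_add_of_sub f g (x := ‖g y‖ • x) (y := ‖g x‖ • y)
    (h _ _) (by simpa [sub_eq_add_neg] using h ‖g y‖ (-‖g x‖))
  simp only [map_smul, real_inner_smul_left, real_inner_smul_right, norm_smul, norm_norm] at key
  refine le_of_mul_le_mul_left ?_ hxy
  calc ‖g x‖ * ‖g y‖ * |⟪f x, f y⟫_ℝ - ⟪g x, g y⟫_ℝ|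
      = |‖g x‖ * (‖g y‖ * ⟪f x, f y⟫_ℝ) - ‖g x‖ * (‖g y‖ * ⟪g x, g y⟫_ℝ)| := by
        rw [← abs_of_pos hxy, ← abs_mul]
        ring_nf
    _ ≤ δ / 2 * ((‖g y‖ * ‖g x‖) ^ 2 + (‖g x‖ * ‖g y‖) ^ 2) := key
    _ = ‖g x‖ * ‖g y‖ * (δ * ‖g x‖ * ‖g y‖) := by ring

end RestrictedIsometry

section MatrixSensing

variable {m n : ℕ}

def frobEmbedding (m n : ℕ) : Matrix (Fin m) (Fin n) ℝ →ₗ[ℝ] EuclideanSpace ℝ (Fin m × Fin n) where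
  toFun B := WithLp.toLp 2 fun p => B p.1 p.2
  map_add' _ _ := rfl
  map_smul' _ _ := rfl

@[simp]
theorem frobEmbedding_apply (B : Matrix (Fin m) (Fin n) ℝ) (p : Fin m × Fin n) :
    frobEmbedding m n B p = B p.1 p.2 :=
  rfl

theorem norm_frobEmbedding (B : Matrix (Fin m) (Fin n) ℝ) : ‖frobEmbedding m n B‖ = frob B := by
  simp [frob, EuclideanSpace.norm_eq, Fintype.sum_prod_type]

theorem inner_frobEmbedding (B C : Matrix (Fin m) (Fin n) ℝ) :
    ⟪frobEmbedding m n B, frobEmbedding m n C⟫_ℝ = (Bᵀ * C).trace := by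
  simp only [PiLp.inner_apply, frobEmbedding_apply, Fintype.sum_prod_type, trace, diag_apply,
    mul_apply, transpose_apply, RCLike.inner_apply, conj_trivial]
  rw [Finset.sum_comm]
  simp only [mul_comm]

def sensingMap (Ms : Fin n → Matrix (Fin m) (Fin m) ℝ) :
    Matrix (Fin m) (Fin m) ℝ →ₗ[ℝ] EuclideanSpace ℝ (Fin n) where
  toFun B := WithLp.toLp 2 (calM Ms B)
  map_add' B C := by ext i; simp [calM, mul_add]
  map_smul' c B := by ext i; simp [calM]

theorem norm_sensingMap (Ms : Fin n → Matrix (Fin m) (Fin m) ℝ) (B : Matrix (Fin m) (Fin m) ℝ) :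
    ‖sensingMap Ms B‖ = vnorm (calM Ms B) := by
  simp [sensingMap, vnorm, EuclideanSpace.norm_eq]

theorem inner_sensingMap (Ms : Fin n → Matrix (Fin m) (Fin m) ℝ) (B C : Matrix (Fin m) (Fin m) ℝ) :
    ⟪sensingMap Ms B, sensingMap Ms C⟫_ℝ = calM Ms B ⬝ᵥ calM Ms C := by
  simp [sensingMap, PiLp.inner_apply, dotProduct, mul_comm]

theorem trace_transpose_calE_mul (Ms : Fin n → Matrix (Fin m) (Fin m) ℝ)
    (Z Y : Matrix (Fin m) (Fin m) ℝ) :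
    ((calE Ms Z)ᵀ * Y).trace = calM Ms Z ⬝ᵥ calM Ms Y - (Zᵀ * Y).trace := by
  simp [calE, calMadj, transpose_sum, sub_mul, Finset.sum_mul, trace_sum, calM, dotProduct]

theorem IsRIP.abs_sq_sub_le {Ms : Fin n → Matrix (Fin m) (Fin m) ℝ} {s : ℕ} {δ : ℝ}
    (hRIP : IsRIP Ms s δ) {B : Matrix (Fin m) (Fin m) ℝ} (hB : B.IsSymm) (hr : B.rank ≤ s) :
    |vnorm (calM Ms B) ^ 2 - frob B ^ 2| ≤ δ * frob B ^ 2 := by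
  obtain ⟨hlow, hupp⟩ := hRIP B hB hr
  rw [abs_le]
  constructor <;> linarith

end MatrixSensing

theorem stmt12_general {m n r r' : ℕ}
    (Ms : Fin n → Matrix (Fin m) (Fin m) ℝ)
    (δ : ℝ) (hRIP : IsRIP Ms (r + r') δ)
    (Z Y : Matrix (Fin m) (Fin m) ℝ) (hZsym : Z.IsSymm) (hZr : Z.rank ≤ r)
    (hYsym : Y.IsSymm) (hYr : Y.rank ≤ r') :
    |((calE Ms Z)ᵀ * Y).trace| ≤ δ * frob Z * frob Y := by
  rw [trace_transpose_calE_mul, ← inner_sensingMap, ← inner_frobEmbedding, ← norm_frobEmbedding,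
    ← norm_frobEmbedding]
  refine abs_inner_map_sub_inner_map_le_mul _ _ fun a b => ?_
  rw [norm_sensingMap, norm_frobEmbedding]
  have hrank : (a • Z + b • Y).rank ≤ r + r' := (Matrix.rank_add_le _ _).trans
    (add_le_add ((Matrix.rank_smul_le a Z).trans hZr) ((Matrix.rank_smul_le b Y).trans hYr))
  exact hRIP.abs_sq_sub_le ((hZsym.smul a).add (hYsym.smul b)) hrank

theorem stmt12 {m n r r' : ℕ}
    (Ms : Fin n → Matrix (Fin m) (Fin m) ℝ) (hMs : ∀ i, (Ms i).IsSymm)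
    (δ : ℝ) (hδ0 : 0 ≤ δ) (hδ1 : δ < 1) (hRIP : IsRIP Ms (r + r') δ)
    (Z Y : Matrix (Fin m) (Fin m) ℝ) (hZsym : Z.IsSymm) (hZr : Z.rank ≤ r)
    (hYsym : Y.IsSymm) (hYr : Y.rank ≤ r') :
    |((calE Ms Z)ᵀ * Y).trace| ≤ δ * frob Z * frob Y :=
  stmt12_general Ms δ hRIP Z Y hZsym hZr hYsym hYr
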